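/- Let V = {1,2}, J ≥ 0, h = 0, so H(σ) = -J σ_1 σ_2 on Ω = {-1,+1}^2, and let β > 0. Define the probability distribution π on Ω by π(++) = π(--) = e^{βJ} / (Z_β + 2 e^{-βJ}(1 - e^{-2βJ})) and π(+-) = π(-+) = (e^{-βJ} + e^{-βJ}(1 - e^{-2βJ})) / (Z_β + 2 e^{-βJ}(1 - e^{-2βJ})), where Z_β = 2e^{βJ} + 2e^{-βJ}. Then π is a stationary distribution of P_β^{DA}: ∑_{τ∈Ω} π(τ) P_β^{DA}(τ, σ) = π(σ) for all σ ∈ Ω. -/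

import Mathlib

/-
From an aligned configuration every proposed flip costs `2J`, so each spin is accepted with
probability `a = e^{-2βJ}`: the chain stays put with probability `(1 - a)²` and moves to each
anti-aligned neighbour with probability `a(1 - a) + a²/2`. From an anti-aligned configuration both
flips are downhill and always accepted, so the chain moves to each aligned neighbour with
probability `1/2`. Stationarity therefore reduces to `π(+-) = (1 - (1 - a)²) π(++)`, which is what
the weights `e^{-βJ}(2 - a)` and `e^{βJ}` satisfy since `e^{-βJ} = a e^{βJ}`.
-/

open Finset Filter
open scoped Classical

noncomputable section

/-- The real spin value of a Boolean spin: `true ↦ +1`, `false ↦ -1`. -/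
def spin (b : Bool) : ℝ := if b then 1 else -1

variable {V : Type*} [Fintype V] [DecidableEq V]

/-- The configuration obtained from `σ` by flipping the spin at `x`. -/
def flipConf (σ : V → Bool) (x : V) : V → Bool := Function.update σ x (!(σ x))

/-- The Ising Hamiltonian with couplings `J` and external fields `h`. -/
def Ham (J : V → V → ℝ) (h : V → ℝ) (σ : V → Bool) : ℝ :=
  -(1 / 2) * ∑ x : V, ∑ y : V, J x y * spin (σ x) * spin (σ y)
    - ∑ x : V, h x * spin (σ x)

/-- `Ecost J h x σ = H(σ^x) - H(σ)`, the energetic cost of flipping the spin at `x`. -/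
def Ecost (J : V → V → ℝ) (h : V → ℝ) (x : V) (σ : V → Bool) : ℝ :=
  Ham J h (flipConf σ x) - Ham J h σ

/-- Metropolis acceptance probability `exp(-β E_y(σ)^+)`. -/
def acc (J : V → V → ℝ) (h : V → ℝ) (β : ℝ) (σ : V → Bool) (y : V) : ℝ :=
  Real.exp (-β * max (Ecost J h y σ) 0)

/-- The Digital Annealer transition matrix. -/
def Pda (J : V → V → ℝ) (h : V → ℝ) (β : ℝ) (σ τ : V → Bool) : ℝ :=
  if τ = σ then ∏ y : V, (1 - acc J h β σ y)
  else ∑ x ∈ Finset.univ.filter (fun x => τ = flipConf σ x),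
        ∑ S ∈ Finset.univ.powerset.filter (fun S : Finset V => x ∈ S),
          ((S.card : ℝ))⁻¹ * (∏ y ∈ S, acc J h β σ y) * ∏ y ∈ Sᶜ, (1 - acc J h β σ y)

/-- The Gibbs distribution at inverse temperature `β`. -/
def gibbs (J : V → V → ℝ) (h : V → ℝ) (β : ℝ) (σ : V → Bool) : ℝ :=
  Real.exp (-β * Ham J h σ) / ∑ τ : V → Bool, Real.exp (-β * Ham J h τ)

/-- The quantity `R(σ, σ^x)` from the paper. -/
def Rw (J : V → V → ℝ) (h : V → ℝ) (β : ℝ) (σ : V → Bool) (x : V) : ℝ :=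
  ∑ S ∈ (Finset.univ.erase x).powerset,
    ((S.card : ℝ) + 1)⁻¹ * (∏ y ∈ S, acc J h β σ y) *
      ∏ y ∈ (Finset.univ.erase x) \ S, (1 - acc J h β σ y)

/-- `τ` is reachable from `σ` at height `E`. -/
def Reachable (H : (V → Bool) → ℝ) (E : ℝ) (σ τ : V → Bool) : Prop :=
  (σ = τ ∧ H σ ≤ E) ∨
    ∃ n : ℕ, 1 ≤ n ∧ ∃ p : ℕ → (V → Bool), p 0 = σ ∧ p n = τ ∧
      (∀ k, 1 ≤ k → k ≤ n → ∃ x, p k = flipConf (p (k - 1)) x) ∧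
      (∀ i ≤ n, H (p i) ≤ E)

/-- `σ` is a local minimum of `H`. -/
def IsLocMin (H : (V → Bool) → ℝ) (σ : V → Bool) : Prop :=
  ¬ ∃ τ, H τ < H σ ∧ Reachable H (H σ) σ τ

/-- `σ` is a ground state (global minimum) of `H`. -/
def IsGround (H : (V → Bool) → ℝ) (σ : V → Bool) : Prop := ∀ τ, H σ ≤ H τ

/-- The depth of a local minimum which is not a ground state: the smallest `E > 0` such
that some strictly lower state is reachable from `σ` at height `H(σ) + E`. -/
def depth (H : (V → Bool) → ℝ) (σ : V → Bool) : ℝ :=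
  sInf {E : ℝ | 0 < E ∧ ∃ τ, H τ < H σ ∧ Reachable H (H σ + E) σ τ}

/-- `γ*`: the maximum of the depths of the local minima of `H` that are not ground
states (`0` if every local minimum is a ground state). -/
def gammaStar (H : (V → Bool) → ℝ) : ℝ :=
  sSup ({0} ∪ {d : ℝ | ∃ σ, IsLocMin H σ ∧ ¬ IsGround H σ ∧ d = depth H σ})

end

/-- The candidate stationary distribution for the two-spin ferromagnet. -/
noncomputable def piDA2 (J β : ℝ) (σ : Fin 2 → Bool) : ℝ :=
  if σ 0 = σ 1 then
    Real.exp (β * J) /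
      ((2 * Real.exp (β * J) + 2 * Real.exp (-β * J))
        + 2 * Real.exp (-β * J) * (1 - Real.exp (-2 * β * J)))
  else
    (Real.exp (-β * J) + Real.exp (-β * J) * (1 - Real.exp (-2 * β * J))) /
      ((2 * Real.exp (β * J) + 2 * Real.exp (-β * J))
        + 2 * Real.exp (-β * J) * (1 - Real.exp (-2 * β * J)))

section Flip

variable {V : Type*} [DecidableEq V]

lemma flipConf_apply_self (σ : V → Bool) (x : V) : flipConf σ x x = !σ x := by
  simp [flipConf]

lemma flipConf_apply_of_ne (σ : V → Bool) {x y : V} (h : y ≠ x) : flipConf σ x y = σ y := by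
  simp [flipConf, h]

lemma flipConf_flipConf (σ : V → Bool) (x : V) : flipConf (flipConf σ x) x = σ := by
  simp [flipConf]

lemma flipConf_ne (σ : V → Bool) (x : V) : flipConf σ x ≠ σ :=
  fun h => by simpa [flipConf_apply_self] using congrFun h x

lemma flipConf_injective (σ : V → Bool) : Function.Injective (flipConf σ) := by
  intro x y h
  by_contra hxy
  simpa [flipConf_apply_self, flipConf_apply_of_ne σ hxy] using congrFun h x

end Flip

section Kernel

variable {V : Type*} [Fintype V] [DecidableEq V] (J : V → V → ℝ) (h : V → ℝ) (β : ℝ)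

lemma Pda_self (σ : V → Bool) : Pda J h β σ σ = ∏ y, (1 - acc J h β σ y) := if_pos rfl

lemma Pda_flipConf (σ : V → Bool) (x : V) :
    Pda J h β σ (flipConf σ x) = ∑ S ∈ univ.powerset.filter (fun S : Finset V => x ∈ S),
      ((S.card : ℝ))⁻¹ * (∏ y ∈ S, acc J h β σ y) * ∏ y ∈ Sᶜ, (1 - acc J h β σ y) := by
  have : univ.filter (fun z => flipConf σ x = flipConf σ z) = {x} := by
    ext z; simp [(flipConf_injective σ).eq_iff, eq_comm]
  rw [Pda, if_neg (flipConf_ne σ x), this, sum_singleton]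

lemma Pda_eq_zero {σ τ : V → Bool} (hτσ : τ ≠ σ) (hτ : ∀ x, τ ≠ flipConf σ x) :
    Pda J h β σ τ = 0 := by
  rw [Pda, if_neg hτσ, filter_false_of_mem fun x _ => hτ x, sum_empty]

end Kernel

lemma Pda_flipConf_fin_two (J : Fin 2 → Fin 2 → ℝ) (h : Fin 2 → ℝ) (β : ℝ) (σ : Fin 2 → Bool)
    {x y : Fin 2} (hxy : x ≠ y) :
    Pda J h β σ (flipConf σ x) =
      acc J h β σ x * (1 - acc J h β σ y) + acc J h β σ x * acc J h β σ y / 2 := by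
  have hsets : univ.powerset.filter (fun S : Finset (Fin 2) => x ∈ S) = {{x}, {x, y}} := by
    revert x y; decide
  have hcompl : ({x}ᶜ : Finset (Fin 2)) = {y} ∧ ({x, y}ᶜ : Finset (Fin 2)) = ∅ := by
    revert x y; decide
  rw [Pda_flipConf, hsets, sum_pair (by simp [Finset.ext_iff, hxy.symm]), hcompl.1, hcompl.2,
    prod_pair hxy, card_pair hxy, card_singleton, prod_singleton, prod_singleton, prod_empty]
  push_cast
  ring

lemma sum_fin_two_bool_eq_flips {M : Type*} [AddCommMonoid M] (f : (Fin 2 → Bool) → M)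
    (σ : Fin 2 → Bool) :
    ∑ τ, f τ = f σ + f (flipConf σ 0) + f (flipConf σ 1) + f (flipConf (flipConf σ 0) 1) := by
  have huniv : (univ : Finset (Fin 2 → Bool))
      = {σ, flipConf σ 0, flipConf σ 1, flipConf (flipConf σ 0) 1} := by
    revert σ; decide
  rw [huniv, sum_insert, sum_insert, sum_insert, sum_singleton, add_assoc, add_assoc]
  all_goals revert σ; decide

lemma flipConf_aligned_iff (σ : Fin 2 → Bool) (x : Fin 2) :
    flipConf σ x 0 = flipConf σ x 1 ↔ σ 0 ≠ σ 1 := by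
  revert σ x; decide

lemma spin_not (b : Bool) : spin (!b) = -spin b := by
  cases b <;> simp [spin]

lemma spin_mul_spin (a b : Bool) : spin a * spin b = if a = b then 1 else -1 := by
  cases a <;> cases b <;> simp [spin]

section TwoSpin

variable (J : ℝ)

lemma Ham_two_spin (σ : Fin 2 → Bool) :
    Ham (fun i j : Fin 2 => if i = j then 0 else J) (fun _ => 0) σ
      = -J * (spin (σ 0) * spin (σ 1)) := by
  simp only [Ham, Fin.sum_univ_two, ite_mul, zero_mul, if_true, zero_ne_one, one_ne_zero,
    if_false, sum_const_zero]
  ring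

lemma Ecost_two_spin (x : Fin 2) (σ : Fin 2 → Bool) :
    Ecost (fun i j : Fin 2 => if i = j then 0 else J) (fun _ => 0) x σ
      = 2 * J * (spin (σ 0) * spin (σ 1)) := by
  rw [Ecost, Ham_two_spin, Ham_two_spin]
  fin_cases x <;>
    simp only [Fin.zero_eta, Fin.mk_one, flipConf_apply_self, spin_not, ne_eq, zero_ne_one,
      one_ne_zero, not_false_eq_true, flipConf_apply_of_ne] <;>
    ring

lemma acc_two_spin (hJ : 0 ≤ J) (β : ℝ) (σ : Fin 2 → Bool) (x : Fin 2) :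
    acc (fun i j : Fin 2 => if i = j then 0 else J) (fun _ => 0) β σ x
      = if σ 0 = σ 1 then Real.exp (-2 * β * J) else 1 := by
  rw [acc, Ecost_two_spin, spin_mul_spin]
  split_ifs
  · rw [mul_one, max_eq_left (by positivity)]
    ring_nf
  · rw [max_eq_right (by linarith), mul_zero, Real.exp_zero]

lemma piDA2_eq (β : ℝ) (σ : Fin 2 → Bool) :
    piDA2 J β σ = (if σ 0 = σ 1 then 1 else 1 - (1 - Real.exp (-2 * β * J)) ^ 2) *
      piDA2 J β (fun _ => true) := by
  have hexp : Real.exp (-β * J) = Real.exp (-2 * β * J) * Real.exp (β * J) := by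
    rw [← Real.exp_add]; ring_nf
  rw [piDA2, piDA2, if_pos (show (fun _ : Fin 2 => true) 0 = (fun _ => true) 1 from rfl)]
  split_ifs
  · ring
  · rw [hexp]; ring

end TwoSpin

theorem two_spin_stationary_distribution_general
    (J : ℝ) (hJ : 0 ≤ J) (β : ℝ) (σ : Fin 2 → Bool) :
    ∑ τ : Fin 2 → Bool,
        piDA2 J β τ *
          Pda (fun i j => if i = j then 0 else J) (fun _ => 0) β τ σ
      = piDA2 J β σ := by
  set Jm : Fin 2 → Fin 2 → ℝ := fun i j => if i = j then 0 else J
  have hfar : Pda Jm (fun _ => 0) β (flipConf (flipConf σ 0) 1) σ = 0 :=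
    Pda_eq_zero _ _ _ (by revert σ; decide) (by revert σ; decide)
  have hflip {x y : Fin 2} (hxy : x ≠ y) :=
    Pda_flipConf_fin_two Jm (fun _ => 0) β (flipConf σ x) hxy
  simp only [flipConf_flipConf] at hflip
  rw [sum_fin_two_bool_eq_flips _ σ, Pda_self, Fin.prod_univ_two, hfar, hflip zero_ne_one,
    hflip one_ne_zero, piDA2_eq J β σ, piDA2_eq J β (flipConf σ 0), piDA2_eq J β (flipConf σ 1)]
  simp only [Jm, acc_two_spin J hJ, flipConf_aligned_iff]
  split_ifs <;> ring

theorem two_spin_stationary_distribution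
    (J : ℝ) (hJ : 0 ≤ J) (β : ℝ) (hβ : 0 < β) (σ : Fin 2 → Bool) :
    ∑ τ : Fin 2 → Bool,
        piDA2 J β τ *
          Pda (fun i j => if i = j then 0 else J) (fun _ => 0) β τ σ
      = piDA2 J β σ :=
  two_spin_stationary_distribution_general J hJ β σ
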